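/- Let T be a real 3×3 matrix and define the correlation function E_T(m,n) = m · (T n) for unit vectors m, n ∈ ℝ³. If E_T admits an LHS (non-steering) model, then sup_{m,n unit vectors} m · (T n) ≥ (2/3) · Σ_{i,j=1}^3 T_{ij}². Equivalently, if the largest singular value T₁ of T satisfies T₁ < (2/3) Σ_{i,j} T_{ij}², then E_T admits no LHS model (the underlying state is steerable). -/

import Mathlib

open MeasureTheory

noncomputable section

/-- `ℝ³` with the Euclidean norm. -/
abbrev V3 : Type := EuclideanSpace ℝ (Fin 3)

/-- The unit sphere `S² ⊂ ℝ³` (as a subtype). -/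
abbrev Sph : Type := Metric.sphere (0 : V3) 1

/-- The rotation-invariant surface measure `dΩ` on the unit sphere `S² ⊂ ℝ³`,
with total measure `4π`. -/
def dOmega : Measure Sph := (volume : Measure V3).toSphere

/-- Euclidean dot product on `ℝ³`. -/
def dot (x y : V3) : ℝ := ∑ i, x i * y i

/-- The bilinear form `m · T n = ∑ᵢⱼ Tᵢⱼ mᵢ nⱼ` associated to a real `3×3` matrix `T`. -/
def bilin (T : Matrix (Fin 3) (Fin 3) ℝ) (m n : V3) : ℝ := ∑ i, ∑ j, T i j * m i * n j

/-- A local-hidden-state (LHS, non-steering) model for a correlation function `E` on `S²×S²`: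
a finite index set, probabilities `p λ ≥ 0` summing to `1`, measurable response functions
`I(·,λ) : S² → [-1,1]`, and unit (Bloch) vectors `λ⃗_λ ∈ ℝ³` reproducing
`E(m,n) = ∑_λ p_λ I(m,λ) (n · λ⃗_λ)` for all unit vectors `m, n`. -/
def HasLHSModel (E : V3 → V3 → ℝ) : Prop :=
  ∃ (N : ℕ) (p : Fin N → ℝ) (I : Fin N → Sph → ℝ) (lam : Fin N → V3),
    (∀ l, 0 ≤ p l) ∧ (∑ l, p l) = 1 ∧
    (∀ l, Measurable (I l)) ∧
    (∀ l m, |I l m| ≤ 1) ∧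
    (∀ l, ‖lam l‖ = 1) ∧
    (∀ m n : Sph, E m n = ∑ l, p l * I l m * dot n (lam l))

/-- The largest singular value of `T`, i.e. the supremum of `m · T n` over unit vectors. -/
def maxSingularValue (T : Matrix (Fin 3) (Fin 3) ℝ) : ℝ :=
  sSup {x : ℝ | ∃ m n : V3, ‖m‖ = 1 ∧ ‖n‖ = 1 ∧ x = bilin T m n}

/-!
Testing the model against `n = eⱼ` gives `Tᵀm = ∑ₗ pₗ I(m,λ) λ⃗ₗ` for every unit `m`, hence
`‖Tᵀm‖² = ∑ₗ pₗ I(m,λ) ⟪m, Tλ⃗ₗ⟫ ≤ ∑ₗ pₗ |⟪m, Tλ⃗ₗ⟫|`. Integrating over `S²` with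
`∫ ⟪m,v⟫² dΩ = 4π/3 ‖v‖²` and `∫ |⟪m,v⟫| dΩ = 2π ‖v‖` yields
`4π/3 ∑ᵢⱼ Tᵢⱼ² ≤ 2π ∑ₗ pₗ ‖Tλ⃗ₗ‖ ≤ 2π T₁`. Both sphere integrals come from Gaussian integrals
over `ℝ³` in polar coordinates, after a reflection moves `v` onto a coordinate axis.
-/

open Set Metric Real
open scoped InnerProductSpace Matrix

theorem integral_Ioi_pow_mul_exp_neg_sq (k : ℕ) :
    ∫ r in Ioi (0 : ℝ), r ^ k * exp (-r ^ 2) = Gamma ((k + 1) / 2) / 2 := by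
  have hk : (-1 : ℝ) < k := by linarith [k.cast_nonneg (α := ℝ)]
  rw [← one_div_mul_eq_div, ← integral_rpow_mul_exp_neg_rpow two_pos hk]
  refine setIntegral_congr_fun measurableSet_Ioi fun r _ => ?_
  norm_cast

theorem integral_abs_pow_mul_exp_neg_sq (k : ℕ) :
    ∫ t : ℝ, |t| ^ k * exp (-t ^ 2) = Gamma ((k + 1) / 2) := by
  have h := integral_comp_abs (f := fun r : ℝ => r ^ k * exp (-r ^ 2))
  simp only [sq_abs] at h
  rw [h, integral_Ioi_pow_mul_exp_neg_sq]
  ring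

theorem MeasureTheory.Measure.integral_volumeIoiPow (n : ℕ) (f : ℝ → ℝ) :
    ∫ r, f r ∂Measure.volumeIoiPow n = ∫ r in Ioi (0 : ℝ), r ^ n * f r := by
  simp only [Measure.volumeIoiPow, ENNReal.ofReal]
  rw [integral_withDensity_eq_integral_smul (measurable_subtype_coe.pow_const _).real_toNNReal,
    integral_subtype_comap measurableSet_Ioi fun r => Real.toNNReal (r ^ n) • f r]
  refine setIntegral_congr_fun measurableSet_Ioi fun r hr => ?_
  rw [NNReal.smul_def, Real.coe_toNNReal _ (pow_nonneg (le_of_lt hr) _), smul_eq_mul]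

section Polar

variable {E : Type*} [NormedAddCommGroup E] [NormedSpace ℝ E] [Nontrivial E]
  [FiniteDimensional ℝ E] [MeasurableSpace E] [BorelSpace E] (μ : Measure E) [μ.IsAddHaarMeasure]

theorem integral_mul_exp_neg_sq_norm_of_homogeneous {g : E → ℝ} {d : ℕ}
    (hg : ∀ c : ℝ, 0 ≤ c → ∀ x, g (c • x) = c ^ d * g x) :
    ∫ x, g x * exp (-‖x‖ ^ 2) ∂μ
      = (∫ s, g s ∂μ.toSphere) * (Gamma ((Module.finrank ℝ E + d) / 2) / 2) := by
  have hpolar : ∀ x : E, g x * exp (-‖x‖ ^ 2) = g (‖x‖⁻¹ • x) * (‖x‖ ^ d * exp (-‖x‖ ^ 2)) := by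
    intro x
    have hx : ‖x‖ • ‖x‖⁻¹ • x = x := by
      rcases eq_or_ne x 0 with rfl | hx
      · simp
      · exact smul_inv_smul₀ (norm_ne_zero_iff.2 hx) x
    have hgx := hg ‖x‖ (norm_nonneg x) (‖x‖⁻¹ • x)
    rw [hx] at hgx
    rw [hgx]
    ring
  have hn : 1 ≤ Module.finrank ℝ E := Module.finrank_pos
  calc ∫ x, g x * exp (-‖x‖ ^ 2) ∂μ
      = ∫ x : ({0}ᶜ : Set E), g x * exp (-‖(x : E)‖ ^ 2) ∂μ.comap (↑) := by
        rw [integral_subtype_comap (measurableSet_singleton _).compl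
          fun x => g x * exp (-‖x‖ ^ 2), restrict_compl_singleton]
    _ = ∫ p : sphere (0 : E) 1 × Ioi (0 : ℝ), g p.1 * ((p.2 : ℝ) ^ d * exp (-(p.2 : ℝ) ^ 2))
          ∂μ.toSphere.prod (.volumeIoiPow (Module.finrank ℝ E - 1)) := by
        rw [← μ.measurePreserving_homeomorphUnitSphereProd.integral_comp
          (Homeomorph.measurableEmbedding _)]
        simp [hpolar]
    _ = _ := by
        rw [integral_prod_mul (fun s : sphere (0 : E) 1 => g s)
          (fun r : Ioi (0 : ℝ) => (r : ℝ) ^ d * exp (-(r : ℝ) ^ 2)),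
          Measure.integral_volumeIoiPow _ fun r => r ^ d * exp (-r ^ 2)]
        simp_rw [← mul_assoc, ← pow_add]
        rw [integral_Ioi_pow_mul_exp_neg_sq]
        push_cast [hn]
        ring_nf

end Polar

theorem integral_inner_comp_eq_of_norm_eq {E : Type*} [NormedAddCommGroup E]
    [InnerProductSpace ℝ E] [FiniteDimensional ℝ E] [MeasurableSpace E] [BorelSpace E]
    (f : ℝ → ℝ → ℝ) {v w : E} (h : ‖v‖ = ‖w‖) :
    ∫ x, f ⟪x, v⟫_ℝ ‖x‖ = ∫ x, f ⟪x, w⟫_ℝ ‖x‖ := by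
  set R := (ℝ ∙ (v - w))ᗮ.reflection
  have hR : ∀ x, ⟪R x, w⟫_ℝ = ⟪x, v⟫_ℝ := fun x => by
    rw [← Submodule.reflection_sub h, LinearIsometryEquiv.inner_map_map]
  rw [← R.measurePreserving.integral_comp R.toHomeomorph.measurableEmbedding
    fun x => f ⟪x, w⟫_ℝ ‖x‖]
  simp [hR]

theorem EuclideanSpace.integral_apply_zero_mul_exp_neg_sq_norm (n : ℕ) (f : ℝ → ℝ) :
    ∫ x : EuclideanSpace ℝ (Fin (n + 1)), f (x 0) * exp (-‖x‖ ^ 2)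
      = (∫ t, f t * exp (-t ^ 2)) * √π ^ n := by
  let φ : Fin (n + 1) → ℝ → ℝ := Fin.cons (fun t => f t * exp (-t ^ 2)) fun _ t => exp (-t ^ 2)
  have hφ : ∀ x : EuclideanSpace ℝ (Fin (n + 1)),
      f (x 0) * exp (-‖x‖ ^ 2) = ∏ j, φ j (x j) := by
    intro x
    rw [EuclideanSpace.norm_sq_eq, Fin.prod_univ_succ, Fin.sum_univ_succ, neg_add, exp_add,
      ← Finset.sum_neg_distrib, exp_sum]
    simp [φ, mul_assoc]
  simp_rw [hφ]
  rw [← (PiLp.volume_preserving_toLp (Fin (n + 1))).integral_comp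
      (MeasurableEquiv.toLp 2 (Fin (n + 1) → ℝ)).measurableEmbedding,
    integral_fintype_prod_volume_eq_prod, Fin.prod_univ_succ]
  have hgauss : ∫ t : ℝ, exp (-t ^ 2) = √π := by simpa using integral_gaussian 1
  simp [φ, hgauss]

theorem EuclideanSpace.integral_sphere_abs_inner_pow_mul_Gamma (n k : ℕ)
    (v : EuclideanSpace ℝ (Fin (n + 1))) :
    (∫ m, |⟪(m : EuclideanSpace ℝ (Fin (n + 1))), v⟫_ℝ| ^ k
        ∂(volume : Measure (EuclideanSpace ℝ (Fin (n + 1)))).toSphere) * Gamma ((n + 1 + k) / 2)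
      = 2 * Gamma ((k + 1) / 2) * √π ^ n * ‖v‖ ^ k := by
  have hpolar := integral_mul_exp_neg_sq_norm_of_homogeneous volume
    (g := fun x : EuclideanSpace ℝ (Fin (n + 1)) => |⟪x, v⟫_ℝ| ^ k) (d := k) fun c hc x => by
      rw [inner_smul_left, abs_mul, mul_pow, RCLike.conj_to_real, abs_of_nonneg hc]
  have hrot := integral_inner_comp_eq_of_norm_eq (fun t r => |t| ^ k * exp (-r ^ 2))
    (v := v) (w := EuclideanSpace.single 0 ‖v‖) (by simp)
  simp only [EuclideanSpace.inner_single_right, RCLike.conj_to_real, abs_mul, abs_norm, mul_pow,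
    mul_assoc] at hrot
  rw [integral_const_mul,
    EuclideanSpace.integral_apply_zero_mul_exp_neg_sq_norm (f := fun t => |t| ^ k),
    integral_abs_pow_mul_exp_neg_sq] at hrot
  rw [finrank_euclideanSpace_fin, hrot] at hpolar
  push_cast at hpolar
  linarith

instance : IsFiniteMeasure dOmega :=
  inferInstanceAs (IsFiniteMeasure (volume : Measure V3).toSphere)

theorem integral_sphere_inner_sq (v : V3) :
    ∫ m : Sph, ⟪(m : V3), v⟫_ℝ ^ 2 ∂dOmega = 4 * π / 3 * ‖v‖ ^ 2 := by
  have h := EuclideanSpace.integral_sphere_abs_inner_pow_mul_Gamma 2 2 v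
  have h52 : Gamma ((2 + 1 + 2) / 2) = 3 * √π / 4 := by
    rw [show (2 + 1 + 2) / 2 = ((2 : ℕ) : ℝ) + 1 / 2 by norm_num, Real.Gamma_nat_add_half]
    norm_num
  have h32 : Gamma ((2 + 1) / 2) = √π / 2 := by
    rw [show (2 + 1) / 2 = ((1 : ℕ) : ℝ) + 1 / 2 by norm_num, Real.Gamma_nat_add_half]
    norm_num
  push_cast at h
  simp only [sq_abs, h52, h32, sq_sqrt pi_pos.le] at h
  refine mul_right_cancel₀ (show 3 * √π / 4 ≠ 0 by positivity) ?_
  rw [dOmega, h]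
  ring

theorem integral_sphere_abs_inner (v : V3) :
    ∫ m : Sph, |⟪(m : V3), v⟫_ℝ| ∂dOmega = 2 * π * ‖v‖ := by
  have h := EuclideanSpace.integral_sphere_abs_inner_pow_mul_Gamma 2 1 v
  push_cast at h
  norm_num [sq_sqrt pi_pos.le] at h
  rwa [dOmega]

theorem integral_sphere_norm_sq_toEuclideanLin (B : Matrix (Fin 3) (Fin 3) ℝ) :
    ∫ m : Sph, ‖B.toEuclideanLin m‖ ^ 2 ∂dOmega = 4 * π / 3 * ∑ i, ∑ j, B i j ^ 2 := by
  have hrow : ∀ (m : V3) i, B.toEuclideanLin m i = ⟪m, WithLp.toLp 2 (B i)⟫_ℝ := by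
    intro m i
    simp [PiLp.inner_apply, Matrix.mulVec, dotProduct]
  have hint : ∀ i, Integrable (fun m : Sph => ⟪(m : V3), WithLp.toLp 2 (B i)⟫_ℝ ^ 2) dOmega :=
    fun i => (by fun_prop : Continuous _).integrable_of_hasCompactSupport (.of_compactSpace _)
  simp_rw [EuclideanSpace.norm_sq_eq, Real.norm_eq_abs, sq_abs, hrow]
  rw [integral_finsetSum _ fun i _ => hint i, Finset.mul_sum]
  refine Finset.sum_congr rfl fun i _ => ?_
  rw [integral_sphere_inner_sq, EuclideanSpace.norm_sq_eq]
  simp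

theorem Matrix.inner_toEuclideanLin_transpose {m n : Type*} [Fintype m] [Fintype n]
    [DecidableEq m] [DecidableEq n] (A : Matrix m n ℝ) (x : EuclideanSpace ℝ m)
    (y : EuclideanSpace ℝ n) :
    ⟪Aᵀ.toEuclideanLin x, y⟫_ℝ = ⟪x, A.toEuclideanLin y⟫_ℝ := by
  rw [← Matrix.conjTranspose_eq_transpose_of_trivial,
    Matrix.toEuclideanLin_conjTranspose_eq_adjoint, LinearMap.adjoint_inner_left]

theorem dot_eq_inner (x y : V3) : dot x y = ⟪x, y⟫_ℝ := by
  simp [dot, PiLp.inner_apply, mul_comm]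

theorem bilin_eq_inner (T : Matrix (Fin 3) (Fin 3) ℝ) (m n : V3) :
    bilin T m n = ⟪m, T.toEuclideanLin n⟫_ℝ := by
  simp [bilin, PiLp.inner_apply, Matrix.mulVec, dotProduct, Finset.sum_mul]
  exact Finset.sum_congr rfl fun i _ => Finset.sum_congr rfl fun j _ => by ring

theorem norm_sq_sum_smul_le_sum_mul_abs_inner {E ι : Type*} [NormedAddCommGroup E]
    [InnerProductSpace ℝ E] (s : Finset ι) {c p : ι → ℝ} (v : ι → E)
    (hc : ∀ i ∈ s, |c i| ≤ p i) :
    ‖∑ i ∈ s, c i • v i‖ ^ 2 ≤ ∑ i ∈ s, p i * |⟪∑ j ∈ s, c j • v j, v i⟫_ℝ| := by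
  set y := ∑ i ∈ s, c i • v i
  calc ‖y‖ ^ 2 = ⟪y, ∑ i ∈ s, c i • v i⟫_ℝ := (real_inner_self_eq_norm_sq y).symm
    _ = ∑ i ∈ s, c i * ⟪y, v i⟫_ℝ := by simp [inner_sum, real_inner_smul_right]
    _ ≤ ∑ i ∈ s, p i * |⟪y, v i⟫_ℝ| := Finset.sum_le_sum fun i hi => (le_abs_self _).trans <| by
        rw [abs_mul]
        exact mul_le_mul_of_nonneg_right (hc i hi) (abs_nonneg _)

theorem exists_norm_eq_one_inner_eq_norm {E : Type*} [NormedAddCommGroup E]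
    [InnerProductSpace ℝ E] [Nontrivial E] (y : E) : ∃ m : E, ‖m‖ = 1 ∧ ⟪m, y⟫_ℝ = ‖y‖ := by
  rcases eq_or_ne y 0 with rfl | hy
  · obtain ⟨m, hm⟩ := exists_norm_eq E zero_le_one
    exact ⟨m, hm, by simp⟩
  · refine ⟨‖y‖⁻¹ • y, by simp [norm_smul, hy], ?_⟩
    rw [real_inner_smul_left, real_inner_self_eq_norm_sq]
    field_simp

theorem norm_toEuclideanLin_le_maxSingularValue (T : Matrix (Fin 3) (Fin 3) ℝ) {n : V3}
    (hn : ‖n‖ = 1) : ‖T.toEuclideanLin n‖ ≤ maxSingularValue T := by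
  have hbdd : BddAbove {x : ℝ | ∃ m n : V3, ‖m‖ = 1 ∧ ‖n‖ = 1 ∧ x = bilin T m n} := by
    refine ⟨‖LinearMap.toContinuousLinearMap T.toEuclideanLin‖, ?_⟩
    rintro _ ⟨m, n, hm, hn, rfl⟩
    rw [bilin_eq_inner]
    calc ⟪m, T.toEuclideanLin n⟫_ℝ ≤ ‖m‖ * ‖LinearMap.toContinuousLinearMap T.toEuclideanLin n‖ :=
          real_inner_le_norm _ _
      _ ≤ ‖m‖ * (‖LinearMap.toContinuousLinearMap T.toEuclideanLin‖ * ‖n‖) := by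
          gcongr; exact ContinuousLinearMap.le_opNorm _ _
      _ = _ := by rw [hm, hn]; ring
  obtain ⟨m, hm, hmn⟩ := exists_norm_eq_one_inner_eq_norm (T.toEuclideanLin n)
  exact le_csSup hbdd ⟨m, n, hm, hn, by rw [bilin_eq_inner, hmn]⟩

theorem toEuclideanLin_transpose_eq_sum_of_lhs {T : Matrix (Fin 3) (Fin 3) ℝ} {N : ℕ}
    {p : Fin N → ℝ} {I : Fin N → Sph → ℝ} {lam : Fin N → V3}
    (hE : ∀ m n : Sph, bilin T m n = ∑ l, p l * I l m * dot n (lam l)) (m : Sph) :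
    Tᵀ.toEuclideanLin m = ∑ l, (p l * I l m) • lam l := by
  ext j
  have hj := hE m ⟨EuclideanSpace.single j 1, by simp⟩
  simp only [bilin_eq_inner, dot_eq_inner, ← Matrix.inner_toEuclideanLin_transpose,
    EuclideanSpace.inner_single_right, EuclideanSpace.inner_single_left, conj_trivial,
    one_mul] at hj
  simpa using hj

/-- If the correlation function `E_T(m,n) = m · T n` admits an LHS
(non-steering) model, then `sup_{m,n unit} m · T n ≥ (2/3) ∑ᵢⱼ Tᵢⱼ²`. -/
theorem lhs_model_implies_singular_value_bound (T : Matrix (Fin 3) (Fin 3) ℝ)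
    (h : HasLHSModel (fun m n => bilin T m n)) :
    maxSingularValue T ≥ (2 / 3) * ∑ i, ∑ j, (T i j) ^ 2 := by
  obtain ⟨N, p, I, lam, hp0, hp1, -, hI, hlam, hE⟩ := h
  have hpoint (m : Sph) :
      ‖Tᵀ.toEuclideanLin m‖ ^ 2 ≤ ∑ l, p l * |⟪(m : V3), T.toEuclideanLin (lam l)⟫_ℝ| := by
    have := norm_sq_sum_smul_le_sum_mul_abs_inner Finset.univ lam
      (c := fun l => p l * I l m) (p := p) fun l _ => by
        rw [abs_mul, abs_of_nonneg (hp0 l)]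
        exact mul_le_of_le_one_right (hp0 l) (hI l m)
    simpa [← toEuclideanLin_transpose_eq_sum_of_lhs hE m,
      Matrix.inner_toEuclideanLin_transpose] using this
  have hint (v : V3) : Integrable (fun m : Sph => |⟪(m : V3), v⟫_ℝ|) dOmega :=
    (by fun_prop : Continuous _).integrable_of_hasCompactSupport (.of_compactSpace _)
  have key : 4 * π / 3 * ∑ i, ∑ j, T i j ^ 2 ≤ 2 * π * maxSingularValue T :=
    calc 4 * π / 3 * ∑ i, ∑ j, T i j ^ 2
        = ∫ m : Sph, ‖Tᵀ.toEuclideanLin m‖ ^ 2 ∂dOmega := by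
          rw [integral_sphere_norm_sq_toEuclideanLin, Finset.sum_comm]
          rfl
      _ ≤ ∫ m : Sph, ∑ l, p l * |⟪(m : V3), T.toEuclideanLin (lam l)⟫_ℝ| ∂dOmega :=
          integral_mono_of_nonneg (.of_forall fun _ => by positivity)
            (integrable_finsetSum _ fun l _ => (hint _).const_mul _) (.of_forall hpoint)
      _ = ∑ l, p l * (2 * π * ‖T.toEuclideanLin (lam l)‖) := by
          rw [integral_finsetSum _ fun l _ => (hint _).const_mul _]
          simp_rw [integral_const_mul, integral_sphere_abs_inner]
      _ ≤ ∑ l, p l * (2 * π * maxSingularValue T) :=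
          Finset.sum_le_sum fun l _ => mul_le_mul_of_nonneg_left (mul_le_mul_of_nonneg_left
            (norm_toEuclideanLin_le_maxSingularValue T (hlam l)) (by positivity)) (hp0 l)
      _ = 2 * π * maxSingularValue T := by rw [← Finset.sum_mul, hp1, one_mul]
  nlinarith [pi_pos]

end
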